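/- arXiv:2006.10508 — 7 statements merged into one kernel-verified Lean document; each statement's English description precedes it below -/
import Mathlib

section
/- A Veltman frame F validates Montagna's principle M: (A▷B) → (A∧□C ▷ B∧□C) for all formulas A, B, C if and only if F satisfies the frame condition: for all x,y,z,u, if xRy, yS_xz, and zRu, then yRu. -/
inductive Form : Type where
  | var : ℕ → Form
  | bot : Form
  | and : Form → Form → Form
  | imp : Form → Form → Form
  | box : Form → Form
  | rhd : Form → Form → Form

namespace Form

def neg (A : Form) : Form := A.imp .bot
def or (A B : Form) : Form := (A.neg).imp B
def dia (A : Form) : Form := (A.neg.box).neg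
def iff (A B : Form) : Form := (A.imp B).and (B.imp A)

end Form

/-- A boolean valuation respecting the propositional connectives
(modal formulas are treated as atoms). -/
def BoolEval (v : Form → Bool) : Prop :=
  v Form.bot = false ∧
  (∀ A B, v (Form.and A B) = (v A && v B)) ∧
  (∀ A B, v (Form.imp A B) = (!(v A) || v B))

/-- Propositional tautologies. -/
def Taut (A : Form) : Prop := ∀ v, BoolEval v → v A = true

/-- The interpretability logic IL extended with an extra axiom schema `Ax`. -/
inductive ILExt (Ax : Form → Prop) : Form → Prop
  | ax {A : Form} : Ax A → ILExt Ax A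
  | taut {A : Form} : Taut A → ILExt Ax A
  | L1 {A B : Form} : ILExt Ax (((A.imp B).box).imp ((A.box).imp (B.box)))
  | L2 {A : Form} : ILExt Ax ((A.box).imp (A.box.box))
  | L3 {A : Form} : ILExt Ax ((((A.box).imp A).box).imp (A.box))
  | J1 {A B : Form} : ILExt Ax (((A.imp B).box).imp (A.rhd B))
  | J2 {A B C : Form} : ILExt Ax (((A.rhd B).and (B.rhd C)).imp (A.rhd C))
  | J3 {A B C : Form} : ILExt Ax (((A.rhd C).and (B.rhd C)).imp ((A.or B).rhd C))
  | J4 {A B : Form} : ILExt Ax ((A.rhd B).imp ((A.dia).imp (B.dia)))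
  | J5 {A : Form} : ILExt Ax ((A.dia).rhd A)
  | mp {A B : Form} : ILExt Ax (A.imp B) → ILExt Ax A → ILExt Ax B
  | nec {A : Form} : ILExt Ax A → ILExt Ax (A.box)

/-- The basic interpretability logic IL. -/
def IL : Form → Prop := ILExt (fun _ => False)

/-- Boolean combinations of boxed formulas. -/
inductive BS1 : Form → Prop
  | box {A : Form} : BS1 (Form.box A)
  | neg {A : Form} : BS1 A → BS1 (Form.neg A)
  | and {A B : Form} : BS1 A → BS1 B → BS1 (A.and B)
  | or {A B : Form} : BS1 A → BS1 B → BS1 (A.or B)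

/-- Essentially Σ₂ formulas. -/
inductive ES2 : Form → Prop
  | box {A : Form} : ES2 (Form.box A)
  | nbox {A : Form} : ES2 (Form.neg (Form.box A))
  | and {A B : Form} : ES2 A → ES2 B → ES2 (A.and B)
  | or {A B : Form} : ES2 A → ES2 B → ES2 (A.or B)
  | nrhd {A B : Form} : ES2 A → ES2 (Form.neg (A.rhd B))

/-- One step of the stratification of ES₂. -/
inductive ES2succ (P : Form → Prop) : Form → Prop
  | base {A : Form} : P A → ES2succ P A
  | and {A B : Form} : ES2succ P A → ES2succ P B → ES2succ P (A.and B)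
  | or {A B : Form} : ES2succ P A → ES2succ P B → ES2succ P (A.or B)
  | nrhd {A B : Form} : P A → ES2succ P (Form.neg (A.rhd B))

/-- The stages ES₂ⁿ: ES₂⁰ = BS₁; ES₂ⁿ⁺¹ closes ES₂ⁿ under ∧, ∨ and ¬(·▷·). -/
def ES2n : ℕ → Form → Prop
  | 0 => BS1
  | n+1 => ES2succ (ES2n n)

/-- Disjunctions of boxed formulas. -/
inductive DisjBox : Form → Prop
  | box {A : Form} : DisjBox (Form.box A)
  | or {A B : Form} : DisjBox A → DisjBox B → DisjBox (A.or B)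

/-- Conjunctions of disjunctions of boxed formulas. -/
inductive CNFBox : Form → Prop
  | base {A : Form} : DisjBox A → CNFBox A
  | and {A B : Form} : CNFBox A → CNFBox B → CNFBox (A.and B)

/-- Veltman frames. -/
structure VFrame where
  W : Type
  nonempty : Nonempty W
  R : W → W → Prop
  S : W → W → W → Prop
  R_trans : Transitive R
  R_cwf : WellFounded (fun x y => R y x)
  S_dom : ∀ x y z, S x y z → R x y ∧ R x z
  S_refl : ∀ x y, R x y → S x y y
  R_S : ∀ x y z, R x y → R y z → S x y z
  S_trans : ∀ x u v w, S x u v → S x v w → S x u w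

/-- Veltman forcing. -/
def force (F : VFrame) (V : F.W → ℕ → Prop) : F.W → Form → Prop
  | w, .var n => V w n
  | _, .bot => False
  | w, .and A B => force F V w A ∧ force F V w B
  | w, .imp A B => force F V w A → force F V w B
  | w, .box A => ∀ v, F.R w v → force F V v A
  | w, .rhd A B => ∀ u, F.R w u → force F V u A → ∃ v, F.S w u v ∧ force F V v B

/-- Validity in a frame. -/
def valid (F : VFrame) (A : Form) : Prop := ∀ V w, force F V w A

/-- The simulation relations bisₙ. -/
def bis (F : VFrame) : ℕ → F.W → F.W → Prop
  | 0 => fun b u => ∀ y, F.R b y ↔ F.R u y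
  | n+1 => fun b u => bis F n b u ∧
      ∀ c, F.R b c → ∃ c', F.R u c' ∧ bis F n c c' ∧ ∀ z, F.S u c' z → F.S b c z

/-- B-simulations. -/
def BSim (F : VFrame) (bs : F.W → F.W → Prop) : Prop :=
  (∀ x x', bs x x' → ∀ y, F.R x y ↔ F.R x' y) ∧
  (∀ x x' y, bs x x' → F.R x y →
      ∃ y', F.S x y y' ∧ bs y y' ∧ ∀ z, F.S x' y' z → F.S x y z)

/-- The depth of a point: the length of the longest R-chain starting at it. -/
noncomputable def depth (F : VFrame) (x : F.W) : ℕ :=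
  sSup {n | ∃ f : Fin (n+1) → F.W, f 0 = x ∧
    ∀ i : Fin n, F.R (f i.castSucc) (f i.succ)}

/-!
If `x R y`, `y` forces `A ∧ □C` and `z` with `y S_x z` witnesses `A ▷ B`, the frame condition
makes every `R`-successor of `z` one of `y`, so `z` forces `□C` as well. Conversely, make `A`
true only at `y`, `B` only at `z`, and `C` exactly at the `R`-successors of `y`: then `y` forces
`A ∧ □C`, so the only possible witness `z` must force `□C`.
-/

def Form.montagna (A B C : Form) : Form :=
  (A.rhd B).imp ((A.and C.box).rhd (B.and C.box))

theorem valid_montagna_of_frame_condition (F : VFrame)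
    (h : ∀ x y z u : F.W, F.R x y → F.S x y z → F.R z u → F.R y u) (A B C : Form) :
    valid F (Form.montagna A B C) := by
  intro V x hAB y hxy ⟨hA, hC⟩
  obtain ⟨z, hxyz, hB⟩ := hAB y hxy hA
  exact ⟨z, hxyz, hB, fun u hzu => hC u (h x y z u hxy hxyz hzu)⟩

theorem frame_condition_of_valid_montagna (F : VFrame)
    (hM : ∀ A B C : Form, valid F (Form.montagna A B C))
    {x y z u : F.W} (hxy : F.R x y) (hxyz : F.S x y z) (hzu : F.R z u) : F.R y u := by
  let V : F.W → ℕ → Prop := fun w n =>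
    match n with
    | 0 => w = y
    | 1 => w = z
    | _ => F.R y w
  have hAB : force F V x ((Form.var 0).rhd (.var 1)) := by
    intro w _ (hw : w = y)
    exact ⟨z, hw ▸ hxyz, rfl⟩
  obtain ⟨v, -, hv : v = z, hC⟩ :=
    hM (.var 0) (.var 1) (.var 2) V x hAB y hxy ⟨rfl, fun _ => id⟩
  exact hC u (hv ▸ hzu)

theorem frame_condition_M_general (F : VFrame) :
    (∀ A B C : Form,
        valid F ((A.rhd B).imp ((A.and (Form.box C)).rhd (B.and (Form.box C)))))
      ↔
    (∀ x y z u : F.W, F.R x y → F.S x y z → F.R z u → F.R y u) :=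
  ⟨fun hM _ _ _ _ => frame_condition_of_valid_montagna F hM,
    fun h => valid_montagna_of_frame_condition F h⟩

/-- frame condition for Montagna's principle M. -/
theorem frame_condition_M (F : VFrame) [Finite F.W] :
    (∀ A B C : Form,
        valid F ((A.rhd B).imp ((A.and (Form.box C)).rhd (B.and (Form.box C)))))
      ↔
    (∀ x y z u : F.W, F.R x y → F.S x y z → F.R z u → F.R y u) :=
  frame_condition_M_general F
end

section
/- A Veltman frame F validates the persistence principle P: (A▷B) → □(A▷B) for all formulas A, B if and only if F satisfies: for all x,y,z,u, if xRy, yRz, and zS_xu, then yRu and zS_yu. -/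
/-! Under the valuation `p₀ = {z}`, `p₁ = {u}`, a world `x` forces `p₀ ▷ p₁` iff `x R z → z Sₓ u`;
instantiating `P` with it yields the frame condition. Conversely, the condition turns an
`Sₓ`-witness for a `z` above `y` into an `S_y`-witness. -/

namespace VFrame

variable (F : VFrame)

def pairValuation (z u : F.W) : F.W → ℕ → Prop := fun w n => w = if n = 0 then z else u

theorem force_var_zero_rhd_var_one_pairValuation (x z u : F.W) :
    force F (F.pairValuation z u) x ((Form.var 0).rhd (Form.var 1)) ↔ (F.R x z → F.S x z u) := by
  simp only [force, pairValuation, if_pos, one_ne_zero, if_false]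
  constructor
  · intro h hxz
    obtain ⟨v, hv, rfl⟩ := h z hxz rfl
    exact hv
  · rintro h t hxt rfl
    exact ⟨u, h hxt, rfl⟩

theorem force_box_rhd_of_rhd
    (h : ∀ x y z u : F.W, F.R x y → F.R y z → F.S x z u → F.S y z u)
    (V : F.W → ℕ → Prop) (w : F.W) (A B : Form) (hw : force F V w (A.rhd B)) :
    force F V w (Form.box (A.rhd B)) := by
  intro v hwv t hvt hA
  obtain ⟨s, hs, hB⟩ := hw t (F.R_trans hwv hvt) hA
  exact ⟨s, h w v t s hwv hvt hs, hB⟩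

end VFrame

/-- frame condition for the persistence principle P. -/
theorem frame_condition_P (F : VFrame) :
    (∀ A B : Form, valid F ((A.rhd B).imp (Form.box (A.rhd B))))
      ↔
    (∀ x y z u : F.W, F.R x y → F.R y z → F.S x z u → F.R y u ∧ F.S y z u) := by
  constructor
  · intro hP x y z u hxy hyz hxzu
    have hx := (F.force_var_zero_rhd_var_one_pairValuation x z u).2 fun _ => hxzu
    have hy := hP (.var 0) (.var 1) (F.pairValuation z u) x hx y hxy
    have hyzu := (F.force_var_zero_rhd_var_one_pairValuation y z u).1 hy hyz
    exact ⟨(F.S_dom y z u hyzu).2, hyzu⟩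
  · intro h A B V w
    exact F.force_box_rhd_of_rhd (fun x y z u hxy hyz hxzu => (h x y z u hxy hyz hxzu).2) V w A B
end

section
/- In IL extended with the Beklemishev principle B (restricted Montagna principle for ES₂-formulas), the principle B': A▷B → (A∧C ▷ B∧C) is derivable, where A ∈ ES₂ and C is a conjunction of disjunctions of boxed formulas. -/
/-- The Beklemishev axiom schema B. -/
def BAx : Form → Prop := fun X =>
  ∃ A B C : Form, ES2 A ∧
    X = (A.rhd B).imp ((A.and (Form.box C)).rhd (B.and (Form.box C)))

/-!
Induction on `C`. A box is exactly an instance of B. For `C₁ ∨ C₂`, the formula `A ∧ (C₁ ∨ C₂)`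
implies `(A ∧ C₁) ∨ (A ∧ C₂)`, and J3 combines the two instances given by induction. For `C₁ ∧ C₂`,
the formula `A ∧ C₁` is again ES₂ because `C₁` is, so the instance for `C₂` with antecedent `A ∧ C₁`
can be chained after the instance for `C₁`.
-/

namespace BoolEval

variable {v : Form → Bool}

theorem imp_eq (hv : BoolEval v) (A B : Form) : v (A.imp B) = (!(v A) || v B) := hv.2.2 A B

theorem and_eq (hv : BoolEval v) (A B : Form) : v (A.and B) = (v A && v B) := hv.2.1 A B

theorem or_eq (hv : BoolEval v) (A B : Form) : v (A.or B) = (v A || v B) := by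
  simp [Form.or, Form.neg, hv.imp_eq, hv.1]

end BoolEval

section Tautologies

variable (P Q R S : Form)

theorem taut_imp_const : Taut (P.imp (Q.imp P)) := fun v hv => by
  simp only [hv.imp_eq]
  cases v P <;> cases v Q <;> rfl

theorem taut_imp_trans : Taut ((P.imp Q).imp ((Q.imp R).imp (P.imp R))) := fun v hv => by
  simp only [hv.imp_eq]
  cases v P <;> cases v Q <;> cases v R <;> rfl

theorem taut_imp_and_imp :
    Taut ((P.imp Q).imp ((P.imp R).imp (((Q.and R).imp S).imp (P.imp S)))) := fun v hv => by
  simp only [hv.imp_eq, hv.and_eq]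
  cases v P <;> cases v Q <;> cases v R <;> cases v S <;> rfl

theorem taut_and_or_inl : Taut ((P.and Q).imp (P.and (Q.or R))) := fun v hv => by
  simp only [hv.imp_eq, hv.and_eq, hv.or_eq]
  cases v P <;> cases v Q <;> cases v R <;> rfl

theorem taut_and_or_inr : Taut ((P.and R).imp (P.and (Q.or R))) := fun v hv => by
  simp only [hv.imp_eq, hv.and_eq, hv.or_eq]
  cases v P <;> cases v Q <;> cases v R <;> rfl

theorem taut_and_or_distrib : Taut ((P.and (Q.or R)).imp ((P.and Q).or (P.and R))) :=
  fun v hv => by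
  simp only [hv.imp_eq, hv.and_eq, hv.or_eq]
  cases v P <;> cases v Q <;> cases v R <;> rfl

theorem taut_and_assoc : Taut ((P.and (Q.and R)).imp ((P.and Q).and R)) := fun v hv => by
  simp only [hv.imp_eq, hv.and_eq]
  cases v P <;> cases v Q <;> cases v R <;> rfl

theorem taut_and_assoc_symm : Taut (((P.and Q).and R).imp (P.and (Q.and R))) := fun v hv => by
  simp only [hv.imp_eq, hv.and_eq]
  cases v P <;> cases v Q <;> cases v R <;> rfl

end Tautologies

namespace ILExt

variable {Ax : Form → Prop} {H P Q R X Y Z : Form}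

theorem imp_const (Q : Form) (h : ILExt Ax P) : ILExt Ax (Q.imp P) :=
  (taut (taut_imp_const P Q)).mp h

theorem imp_trans (h₁ : ILExt Ax (P.imp Q)) (h₂ : ILExt Ax (Q.imp R)) : ILExt Ax (P.imp R) :=
  ((taut (taut_imp_trans P Q R)).mp h₁).mp h₂

theorem imp_of_imp_and_imp (h₁ : ILExt Ax (H.imp P)) (h₂ : ILExt Ax (H.imp Q))
    (h : ILExt Ax ((P.and Q).imp R)) : ILExt Ax (H.imp R) :=
  (((taut (taut_imp_and_imp H P Q R)).mp h₁).mp h₂).mp h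

theorem rhd_of_imp (h : ILExt Ax (X.imp Y)) : ILExt Ax (X.rhd Y) :=
  J1.mp h.nec

theorem imp_rhd_mono_right (h₁ : ILExt Ax (H.imp (X.rhd Y))) (h₂ : ILExt Ax (Y.imp Z)) :
    ILExt Ax (H.imp (X.rhd Z)) :=
  imp_of_imp_and_imp h₁ (imp_const H (rhd_of_imp h₂)) J2

theorem imp_rhd_anti_left (h₁ : ILExt Ax (X.imp Y)) (h₂ : ILExt Ax (H.imp (Y.rhd Z))) :
    ILExt Ax (H.imp (X.rhd Z)) :=
  imp_of_imp_and_imp (imp_const H (rhd_of_imp h₁)) h₂ J2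

theorem imp_rhd_or_left (h₁ : ILExt Ax (H.imp (X.rhd Z))) (h₂ : ILExt Ax (H.imp (Y.rhd Z))) :
    ILExt Ax (H.imp ((X.or Y).rhd Z)) :=
  imp_of_imp_and_imp h₁ h₂ J3

end ILExt

theorem DisjBox.es2 {C : Form} (h : DisjBox C) : ES2 C := by
  induction h with
  | box => exact .box
  | or _ _ ih₁ ih₂ => exact .or ih₁ ih₂

theorem CNFBox.es2 {C : Form} (h : CNFBox C) : ES2 C := by
  induction h with
  | base h => exact h.es2
  | and _ _ ih₁ ih₂ => exact .and ih₁ ih₂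

/-- Montagna's principle for the fixed formula `C`, restricted to ES₂ antecedents, in ILB;
B is its instance for boxed `C`. -/
def MontagnaES2 (C : Form) : Prop :=
  ∀ A B : Form, ES2 A → ILExt BAx ((A.rhd B).imp ((A.and C).rhd (B.and C)))

namespace MontagnaES2

variable {C₁ C₂ : Form}

theorem box (D : Form) : MontagnaES2 D.box :=
  fun A B hA => .ax ⟨A, B, D, hA, rfl⟩

theorem or (h₁ : MontagnaES2 C₁) (h₂ : MontagnaES2 C₂) : MontagnaES2 (C₁.or C₂) := by
  intro A B hA
  have left := ILExt.imp_rhd_mono_right (h₁ A B hA) (.taut (taut_and_or_inl B C₁ C₂))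
  have right := ILExt.imp_rhd_mono_right (h₂ A B hA) (.taut (taut_and_or_inr B C₁ C₂))
  exact ILExt.imp_rhd_anti_left (.taut (taut_and_or_distrib A C₁ C₂))
    (ILExt.imp_rhd_or_left left right)

theorem and (hC₁ : ES2 C₁) (h₁ : MontagnaES2 C₁) (h₂ : MontagnaES2 C₂) :
    MontagnaES2 (C₁.and C₂) := by
  intro A B hA
  have chained := ILExt.imp_trans (h₁ A B hA) (h₂ (A.and C₁) (B.and C₁) (hA.and hC₁))
  exact ILExt.imp_rhd_anti_left (.taut (taut_and_assoc A C₁ C₂))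
    (ILExt.imp_rhd_mono_right chained (.taut (taut_and_assoc_symm B C₁ C₂)))

end MontagnaES2

theorem DisjBox.montagnaES2 {C : Form} (h : DisjBox C) : MontagnaES2 C := by
  induction h with
  | box => exact .box _
  | or _ _ ih₁ ih₂ => exact ih₁.or ih₂

theorem CNFBox.montagnaES2 {C : Form} (h : CNFBox C) : MontagnaES2 C := by
  induction h with
  | base h => exact h.montagnaES2
  | and h₁ _ ih₁ ih₂ => exact .and h₁.es2 ih₁ ih₂

/-- ILB derives B'. -/
theorem ILB_derives_B' (A B C : Form) (hA : ES2 A) (hC : CNFBox C) :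
    ILExt BAx ((A.rhd B).imp ((A.and C).rhd (B.and C))) :=
  hC.montagnaES2 A B hA
end

section
/- If bis_n(x,x') holds in a Veltman frame and depth(x) ≤ n, then bis_m(x,x') holds for all m. -/
/-!
bisₙ₊₁(x, x') asks for bisₙ only at the R-successors of x, and these have strictly smaller depth,
because in a finite frame R is transitive and irreflexive, so R-chains are injective and the
depth is finite. Hence, by induction on n, depth x ≤ n and bisₙ(x, x') give bisₙ₊₁(x, x'); iterating
gives every larger index, and smaller ones follow since bisₙ is antitone in n.
-/

namespace VFrame

variable {F : VFrame}

lemma bis_antitone : Antitone (bis F) :=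
  antitone_nat_of_succ_le fun _ _ _ h => h.1

lemma R_irrefl (x : F.W) : ¬ F.R x x :=
  F.R_cwf.irrefl.irrefl x

instance : IsTrans F.W F.R := ⟨fun _ _ _ hab hbc => F.R_trans hab hbc⟩

variable (F) in
def chainLengths (x : F.W) : Set ℕ :=
  {n | ∃ f : Fin (n+1) → F.W, f 0 = x ∧ ∀ i : Fin n, F.R (f i.castSucc) (f i.succ)}

lemma zero_mem_chainLengths (x : F.W) : 0 ∈ F.chainLengths x :=
  ⟨fun _ => x, rfl, fun i => i.elim0⟩

lemma succ_mem_chainLengths {x c : F.W} (hxc : F.R x c) {k : ℕ} (hk : k ∈ F.chainLengths c) :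
    k + 1 ∈ F.chainLengths x := by
  obtain ⟨f, rfl, hf⟩ := hk
  refine ⟨Fin.cons x f, rfl, Fin.cases hxc fun j => ?_⟩
  simpa only [← Fin.succ_castSucc, Fin.cons_succ] using hf j

lemma injective_of_chain {n : ℕ} {f : Fin (n+1) → F.W}
    (hf : ∀ i : Fin n, F.R (f i.castSucc) (f i.succ)) : f.Injective := by
  have hlt := (Fin.liftFun_iff_succ F.R).mpr hf
  intro i j hij
  by_contra hne
  rcases lt_or_gt_of_ne hne with h | h <;> exact R_irrefl _ (hij ▸ hlt h)

lemma chainLengths_bddAbove [Finite F.W] (x : F.W) : BddAbove (F.chainLengths x) := by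
  refine ⟨Nat.card F.W, fun n ⟨f, _, hf⟩ => ?_⟩
  have := Nat.card_le_card_of_injective f (injective_of_chain hf)
  rw [Nat.card_eq_fintype_card, Fintype.card_fin] at this
  omega

lemma depth_lt_of_R [Finite F.W] {x c : F.W} (hxc : F.R x c) : depth F c < depth F x := by
  have hc : depth F c ∈ F.chainLengths c :=
    Nat.sSup_mem ⟨0, zero_mem_chainLengths c⟩ (chainLengths_bddAbove c)
  exact Nat.lt_of_succ_le (le_csSup (chainLengths_bddAbove x) (succ_mem_chainLengths hxc hc))

lemma bis_succ_of_depth_le [Finite F.W] {n : ℕ} {x x' : F.W} (hd : depth F x ≤ n)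
    (h : bis F n x x') : bis F (n + 1) x x' := by
  induction n generalizing x x' with
  | zero => exact ⟨h, fun c hxc => absurd (depth_lt_of_R hxc) (by omega)⟩
  | succ k ih =>
    refine ⟨h, fun c hxc => ?_⟩
    obtain ⟨c', hx'c', hcc', hS⟩ := h.2 c hxc
    exact ⟨c', hx'c', ih (by have := depth_lt_of_R hxc; omega) hcc', hS⟩

lemma bis_add_of_depth_le [Finite F.W] {n : ℕ} {x x' : F.W} (hd : depth F x ≤ n)
    (h : bis F n x x') (k : ℕ) : bis F (n + k) x x' := by
  induction k with
  | zero => exact h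
  | succ k ih => exact bis_succ_of_depth_le (hd.trans (Nat.le_add_right n k)) ih

end VFrame

/-- if bisₙ(x,x') and depth(x) ≤ n then bisₘ(x,x') for all m. -/
theorem bis_stabilizes (F : VFrame) [Finite F.W] (n : ℕ) (x x' : F.W)
    (h : bis F n x x') (hd : depth F x ≤ n) : ∀ m, bis F m x x' := by
  intro m
  rcases le_total m n with hmn | hnm
  · exact VFrame.bis_antitone hmn x x' h
  · simpa only [Nat.add_sub_cancel' hnm] using VFrame.bis_add_of_depth_le hd h (m - n)
end

section
/- Let M be an IL-model and n a natural number. If bis_n(b,u) holds in M, then for every modal formula A in the class ES₂ⁿ, if b forces A then u forces A. -/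
/-!
Induction on `n`. Formulas in `BS₁` only depend on the set of `R`-successors of a point, which
`bis₀` keeps fixed. In the step the propositional connectives are routine; for `¬(A ▷ B)` a
counterexample `c` at `b` is transported along `bisₙ₊₁` to some `c'` at `u`: the induction
hypothesis moves `A` from `c` to `c'`, and `c' S_u ↑ ⊆ c S_b ↑` shows that no `S_u`-successor of
`c'` can force `B`.
-/

section

variable {F : VFrame} {V : F.W → ℕ → Prop}

theorem BS1.force_iff_of_R_iff {b u : F.W} (h : ∀ y, F.R b y ↔ F.R u y) {A : Form}
    (hA : BS1 A) : force F V b A ↔ force F V u A := by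
  induction hA with
  | box => exact forall_congr' fun v => imp_congr (h v) Iff.rfl
  | neg _ ih => simp only [Form.neg, force, ih]
  | and _ _ ih₁ ih₂ => simp only [force, ih₁, ih₂]
  | or _ _ ih₁ ih₂ => simp only [Form.or, Form.neg, force, ih₁, ih₂]

theorem force_neg_rhd_of_forall_R {b u : F.W} {A B : Form}
    (hstep : ∀ c, F.R b c → ∃ c', F.R u c' ∧ (force F V c A → force F V c' A) ∧
      ∀ z, F.S u c' z → F.S b c z)
    (hb : force F V b (A.rhd B).neg) : force F V u (A.rhd B).neg := by
  intro hu
  apply hb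
  intro c hbc hcA
  obtain ⟨c', huc', htransfer, hS⟩ := hstep c hbc
  obtain ⟨v, hv, hvB⟩ := hu c' huc' (htransfer hcA)
  exact ⟨v, hS v hv, hvB⟩

theorem ES2succ.force_of_force {P : Form → Prop} {b u : F.W}
    (hbase : ∀ A, P A → force F V b A → force F V u A)
    (hstep : ∀ c, F.R b c → ∃ c', F.R u c' ∧ (∀ A, P A → force F V c A → force F V c' A) ∧
      ∀ z, F.S u c' z → F.S b c z)
    {A : Form} (hA : ES2succ P A) : force F V b A → force F V u A := by
  induction hA with
  | base hP => exact hbase _ hP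
  | and _ _ ih₁ ih₂ => exact fun hb => ⟨ih₁ hb.1, ih₂ hb.2⟩
  | @or A B _ _ ih₁ ih₂ =>
    intro hb hu
    by_cases hbA : force F V b A
    · exact absurd (ih₁ hbA) hu
    · exact ih₂ (hb hbA)
  | nrhd hP =>
    refine force_neg_rhd_of_forall_R fun c hbc => ?_
    obtain ⟨c', huc', hP', hS⟩ := hstep c hbc
    exact ⟨c', huc', hP' _ hP, hS⟩

end

/-- bisₙ preserves forcing of ES₂ⁿ formulas. -/
theorem bis_preserves_ES2n (F : VFrame) (V : F.W → ℕ → Prop) (n : ℕ)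
    (b u : F.W) (h : bis F n b u) :
    ∀ A : Form, ES2n n A → force F V b A → force F V u A := by
  induction n generalizing b u with
  | zero => exact fun A hA => (BS1.force_iff_of_R_iff h hA).mp
  | succ n ih =>
    refine fun A hA => ES2succ.force_of_force (ih b u h.1) (fun c hbc => ?_) hA
    obtain ⟨c', huc', hbis, hS⟩ := h.2 c hbc
    exact ⟨c', huc', ih c c' hbis, hS⟩
end

section
/- For every finite Veltman frame F, every n, and every world b of F, there exist a valuation V on F and a modal formula A in ES₂ⁿ such that for every world u, u forces A (under V) if and only if bis_n(b,u) holds in F. -/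
/-!
Name each world `z` by a formula `p z` forced exactly at `z` (a variable, under an injective
numbering of the worlds). Finite conjunctions over the worlds then define the `bis₀`-class of `c`
by `A₀(c) = ⋀_{c R y} ◇ p y ∧ □ ⋁_{c R y} p y`, and the `bisₙ₊₁`-class of `c` by
`Aₙ(c) ∧ ⋀_{c R d} ¬(Aₙ(d) ▷ ¬⋁_{d S_c z} p z)`: at `u`, the conjunct for `d` says that some
`u R e` with `bisₙ(d, e)` has `eS_u↑ ⊆ dS_c↑`, which is the clause of `bisₙ₊₁(c, u)` for `d`.
-/

namespace Form

def top : Form := (box bot).or (box bot).neg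

def bigAnd : List Form → Form
  | [] => top
  | A :: L => A.and (bigAnd L)

def bigOr : List Form → Form
  | [] => bot
  | A :: L => A.or (bigOr L)

end Form

section Forcing

variable {F : VFrame} {V : F.W → ℕ → Prop} {w : F.W} {A B : Form}

@[simp] lemma force_neg : force F V w A.neg ↔ ¬ force F V w A := Iff.rfl

@[simp] lemma force_or : force F V w (A.or B) ↔ force F V w A ∨ force F V w B := by
  simp only [Form.or, force, force_neg, or_iff_not_imp_left]

@[simp] lemma force_dia : force F V w A.dia ↔ ∃ v, F.R w v ∧ force F V v A := by
  simp [Form.dia, force]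

@[simp] lemma force_top : force F V w Form.top := by
  simpa only [Form.top, force_or, force_neg] using em _

@[simp] lemma force_bigAnd {L : List Form} :
    force F V w (Form.bigAnd L) ↔ ∀ A ∈ L, force F V w A := by
  induction L with
  | nil => simp [Form.bigAnd]
  | cons A L ih => simp [Form.bigAnd, force, ih]

@[simp] lemma force_bigOr {L : List Form} :
    force F V w (Form.bigOr L) ↔ ∃ A ∈ L, force F V w A := by
  induction L with
  | nil => simp [Form.bigOr, force]
  | cons A L ih => simp [Form.bigOr, ih]

end Forcing

lemma BS1.top : BS1 Form.top := .or .box (.neg .box)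

lemma BS1.dia {A : Form} : BS1 A.dia := .neg .box

lemma BS1.bigAnd {L : List Form} (h : ∀ A ∈ L, BS1 A) : BS1 (Form.bigAnd L) := by
  induction L with
  | nil => exact .top
  | cons A L ih =>
    obtain ⟨hA, hL⟩ := List.forall_mem_cons.1 h
    exact .and hA (ih hL)

lemma ES2n.of_BS1 {A : Form} (h : BS1 A) : ∀ n, ES2n n A
  | 0 => h
  | n + 1 => .base (of_BS1 h n)

lemma ES2n.and {n : ℕ} {A B : Form} (hA : ES2n n A) (hB : ES2n n B) : ES2n n (A.and B) := by
  cases n with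
  | zero => exact BS1.and hA hB
  | succ n => exact ES2succ.and hA hB

lemma ES2n.bigAnd {n : ℕ} {L : List Form} (h : ∀ A ∈ L, ES2n n A) :
    ES2n n (Form.bigAnd L) := by
  induction L with
  | nil => exact .of_BS1 .top n
  | cons A L ih =>
    obtain ⟨hA, hL⟩ := List.forall_mem_cons.1 h
    exact .and hA (ih hL)

noncomputable section CharacteristicFormulas

open Classical

variable {F : VFrame} (p : F.W → Form) (l : List F.W)

def worldsForm (P : F.W → Prop) : Form := Form.bigOr ((l.filter (P ·)).map p)

def bisForm : ℕ → F.W → Form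
  | 0, c => (Form.bigAnd ((l.filter (F.R c ·)).map fun y => (p y).dia)).and
      (worldsForm p l (F.R c)).box
  | n + 1, c => (bisForm n c).and
      (Form.bigAnd ((l.filter (F.R c ·)).map fun d =>
        ((bisForm n d).rhd (worldsForm p l (F.S c d)).neg).neg))

lemma ES2n_bisForm : ∀ n c, ES2n n (bisForm p l n c)
  | 0, c => .and (.bigAnd (by simp only [List.mem_map]; rintro _ ⟨y, -, rfl⟩; exact .dia)) .box
  | n + 1, c => .and (.base (ES2n_bisForm n c))
      (.bigAnd (by simp only [List.mem_map]; rintro _ ⟨d, -, rfl⟩; exact .nrhd (ES2n_bisForm n d)))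

variable {V : F.W → ℕ → Prop} (hp : ∀ u z, force F V u (p z) ↔ u = z) {l} (hl : ∀ w, w ∈ l)
include hp hl

lemma force_worldsForm {P : F.W → Prop} {u : F.W} : force F V u (worldsForm p l P) ↔ P u := by
  simp [worldsForm, hp, hl]

lemma force_bisForm : ∀ n c u, force F V u (bisForm p l n c) ↔ bis F n c u
  | 0, c, u => by
    simp [bisForm, force, force_worldsForm p hp hl, hl, hp, bis, iff_def, forall_and]
  | n + 1, c, u => by
    simp [bisForm, force, force_worldsForm p hp hl, force_bisForm n, hl, bis]

end CharacteristicFormulas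

/-- on a finite frame, every bisₙ-class of a point is definable
by an ES₂ⁿ formula under a suitable valuation. -/
theorem bis_definable (F : VFrame) [Finite F.W] (n : ℕ) (b : F.W) :
    ∃ (V : F.W → ℕ → Prop) (A : Form), ES2n n A ∧
      ∀ u : F.W, force F V u A ↔ bis F n b u := by
  obtain ⟨idx, hidx⟩ := Countable.exists_injective_nat F.W
  obtain ⟨l, -, hl⟩ := Finite.exists_univ_list F.W
  let p : F.W → Form := fun w => .var (idx w)
  exact ⟨fun w k => idx w = k, bisForm p l n b, ES2n_bisForm p l n b,
    force_bisForm p (fun _ _ => hidx.eq_iff) hl n b⟩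
end

section
/- There exists a finite Veltman frame that validates all instances of Beklemishev's principle B and all instances of the principle W (A▷B → A▷B∧□¬A), but fails the frame condition for R (namely there exist x,y,z,u,v with xRy, yRz, zS_xu, uRv and not zS_yv); hence IL plus B plus W does not derive R. -/
/-! In the frame below `z S_x u R v` but not `z S_y v`, so the frame condition for R fails.
W holds since each `S_w ; R` is irreflexive: being transitive on any Veltman frame, it is then
conversely well-founded on a finite one. For B, essentially Σ₂ formulas are preserved along
B-simulations, e.g. between `R`-maximal worlds. Given `A ∧ □C` at an `R`-successor `a` of `w`,
apply `A ▷ B` at `a` itself, whose `S_w`-successors see only `R`-successors of `a` and so keep `□C`.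
The one exception is `a = z` under `w = x` (its `S_x`-successor `u` sees `v`); there `A ▷ B` is
applied at the maximal world `v` instead. -/

section VeltmanFrame

variable {F : VFrame}

theorem BSim.force_of_force {bs : F.W → F.W → Prop} (hbs : BSim F bs)
    {V : F.W → ℕ → Prop} {A : Form} (hA : ES2 A) :
    ∀ {x x' : F.W}, bs x x' → force F V x A → force F V x' A := by
  induction hA with
  | box =>
    intro x x' hxx' hx t ht
    exact hx t ((hbs.1 x x' hxx' t).2 ht)
  | nbox =>
    intro x x' hxx' hx hx'
    exact hx fun t ht => hx' t ((hbs.1 x x' hxx' t).1 ht)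
  | and _ _ ihA ihB =>
    intro x x' hxx' hx
    exact ⟨ihA hxx' hx.1, ihB hxx' hx.2⟩
  | @or A B _ _ ihA ihB =>
    intro x x' hxx' hx
    by_cases hA : force F V x A
    · exact fun hA' => absurd (ihA hxx' hA) hA'
    · exact fun _ => ihB hxx' (hx hA)
  | nrhd _ ihA =>
    intro x x' hxx' hx hx'
    refine hx fun y hxy hy => ?_
    obtain ⟨y', hyy', hbs_y, hS⟩ := hbs.2 x x' y hxx' hxy
    have hx'y' : F.R x' y' := (hbs.1 x x' hxx' y').1 (F.S_dom x y y' hyy').2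
    obtain ⟨z, hz, hzB⟩ := hx' y' hx'y' (ihA hbs_y hy)
    exact ⟨z, hS z hz, hzB⟩

theorem bSim_eq_or_maximal :
    BSim F (fun a b => a = b ∨ (∀ t, ¬ F.R a t) ∧ ∀ t, ¬ F.R b t) := by
  refine ⟨?_, ?_⟩
  · rintro x x' (rfl | ⟨hx, hx'⟩) t
    · rfl
    · exact iff_of_false (hx t) (hx' t)
  · rintro x x' y (rfl | ⟨hx, -⟩) hxy
    · exact ⟨y, F.S_refl x y hxy, Or.inl rfl, fun _ h => h⟩
    · exact absurd hxy (hx y)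

theorem valid_B_of_bSim {bs : F.W → F.W → Prop} (hbs : BSim F bs)
    (h : ∀ w u, F.R w u → ∃ u', F.R w u' ∧ bs u u' ∧
      ∀ v, F.S w u' v → F.S w u v ∧ ∀ t, F.R v t → F.R u t)
    {A : Form} (hA : ES2 A) (B C : Form) :
    valid F ((A.rhd B).imp ((A.and (Form.box C)).rhd (B.and (Form.box C)))) := by
  intro V w hAB u hwu ⟨huA, huC⟩
  obtain ⟨u', hwu', hbs_u, hS⟩ := h w u hwu
  obtain ⟨v, hv, hvB⟩ := hAB u' hwu' (hbs.force_of_force hA hbs_u huA)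
  exact ⟨v, (hS v hv).1, hvB, fun t hvt => huC t ((hS v hv).2 t hvt)⟩

theorem valid_W_of_wellFounded
    (hwf : ∀ w : F.W, WellFounded fun a b => ∃ t, F.S w b t ∧ F.R t a) (A B : Form) :
    valid F ((A.rhd B).imp (A.rhd (B.and (Form.box A.neg)))) := by
  intro V w hAB u
  induction u using (hwf w).induction with
  | _ u ih =>
    intro hwu huA
    obtain ⟨t, hut, htB⟩ := hAB u hwu huA
    by_cases hA : ∃ s, F.R t s ∧ force F V s A
    · obtain ⟨s, hts, hsA⟩ := hA
      have hwt := (F.S_dom w u t hut).2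
      obtain ⟨t', hst', ht'⟩ := ih s ⟨t, hut, hts⟩ (F.R_trans hwt hts) hsA
      exact ⟨t', F.S_trans w u s t' (F.S_trans w u t s hut (F.R_S w t s hwt hts)) hst', ht'⟩
    · exact ⟨t, hut, htB, fun s hts hsA => hA ⟨s, hts, hsA⟩⟩

theorem isTrans_S_comp_R (w : F.W) : IsTrans F.W fun a b => ∃ t, F.S w b t ∧ F.R t a := by
  refine ⟨fun a b c ⟨t, hbt, hta⟩ ⟨t', hct', ht'b⟩ => ⟨t, ?_, hta⟩⟩
  have hwt' := (F.S_dom w c t' hct').2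
  exact F.S_trans w c b t (F.S_trans w c t' b hct' (F.R_S w t' b hwt' ht'b)) hbt

theorem wellFounded_S_comp_R_of_finite [Finite F.W]
    (hirr : ∀ w a t, F.S w a t → ¬ F.R t a) (w : F.W) :
    WellFounded fun a b => ∃ t, F.S w b t ∧ F.R t a :=
  haveI := isTrans_S_comp_R w
  haveI : Std.Irrefl fun a b => ∃ t, F.S w b t ∧ F.R t a :=
    ⟨fun a ⟨t, hat, hta⟩ => hirr w a t hat hta⟩
  Finite.wellFounded_of_trans_of_irrefl _

end VeltmanFrame

namespace BWFrame

inductive Pt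
  | x | y | z | u | v
  deriving DecidableEq

open Pt

instance : Fintype Pt := Fintype.ofList [x, y, z, u, v] (by rintro (_ | _ | _ | _ | _) <;> simp)

def R : Pt → Pt → Bool
  | x, y | x, z | x, u | x, v | y, z | y, v | u, v => true
  | _, _ => false

/-- `S_x` is the linear order `y < z < u < v` (with `z S_x u` the essential edge, the rest
forced by the frame axioms); `S_y` and `S_u` are the identity on `R`-successors. -/
def S : Pt → Pt → Pt → Bool
  | x, y, y | x, y, z | x, y, u | x, y, v | x, z, z | x, z, u | x, z, v
  | x, u, u | x, u, v | x, v, v | y, z, z | y, v, v | u, v, v => true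
  | _, _, _ => false

/-- Reducible, so that `decide` finds the decidability of `frame.R` and `frame.S`. -/
abbrev frame : VFrame where
  W := Pt
  nonempty := ⟨x⟩
  R a b := R a b
  S w a b := S w a b
  R_trans := fun {a b c} => by revert a b c; decide
  R_cwf :=
    haveI : IsTrans Pt fun a b => R b a := ⟨by decide⟩
    haveI : Std.Irrefl fun a b => R b a := ⟨by decide⟩
    Finite.wellFounded_of_trans_of_irrefl _
  S_dom := by decide
  S_refl := by decide
  R_S := by decide
  S_trans := by decide

end BWFrame

open BWFrame in
/-- a finite Veltman frame validating B and W but failing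
the frame condition for R. -/
theorem BW_not_derives_R :
    ∃ F : VFrame, Finite F.W ∧
      (∀ A B C : Form, ES2 A →
        valid F ((A.rhd B).imp
          ((A.and (Form.box C)).rhd (B.and (Form.box C))))) ∧
      (∀ A B : Form,
        valid F ((A.rhd B).imp (A.rhd (B.and (Form.box (A.neg)))))) ∧
      (∃ x y z u v : F.W, F.R x y ∧ F.R y z ∧ F.S x z u ∧ F.R u v ∧
        ¬ F.S y z v) := by
  have : Finite frame.W := inferInstanceAs (Finite Pt)
  have hB : ∀ w a, frame.R w a → ∃ b, frame.R w b ∧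
      (a = b ∨ (∀ t, ¬ frame.R a t) ∧ ∀ t, ¬ frame.R b t) ∧
      ∀ c, frame.S w b c → frame.S w a c ∧ ∀ t, frame.R c t → frame.R a t := by
    decide
  have hW : ∀ w a t, frame.S w a t → ¬ frame.R t a := by decide
  exact ⟨frame, inferInstance, fun A B C hA => valid_B_of_bSim bSim_eq_or_maximal hB hA B C,
    fun A B => valid_W_of_wellFounded (wellFounded_S_comp_R_of_finite hW) A B,
    .x, .y, .z, .u, .v, rfl, rfl, rfl, rfl, Bool.false_ne_true⟩
end
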